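/- arXiv:2312.06885 — 5 statements merged into one kernel-verified Lean document; each statement's English description precedes it below -/
import Mathlib

section
/- Let f : ℝⁿ → ℝⁿ, let A be a real n×n matrix, set F_n(x) := f(x) − A x, let λ ∈ ℝ and w ∈ ℝⁿ. Suppose h : ℝⁿ → ℝ is differentiable and satisfies ⟨∇h(x), f(x)⟩ − λ h(x) + ⟨w, F_n(x)⟩ = 0 for all x, and that γ : ℝ → ℝⁿ is a differentiable solution curve with γ′(τ) = f(γ(τ)) and that τ ↦ ⟨w, F_n(γ(τ))⟩ is continuous. Then for every t ≥ 0, h(γ(0)) = e^{−λ t} h(γ(t)) + ∫₀ᵗ e^{−λ τ} ⟨w, F_n(γ(τ))⟩ dτ. -/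
open scoped RealInnerProductSpace

/-! Along a solution curve the PDE reads `d/dτ h(γ τ) = λ h(γ τ) − ⟨w, Fₙ(γ τ)⟩`, a scalar linear
ODE; integrating `d/dτ (e^{−λτ} h(γ τ)) = −e^{−λτ} ⟨w, Fₙ(γ τ)⟩` over `[0, t]` gives the formula. -/

theorem HasGradientAt.comp_hasDerivAt {E : Type*} [NormedAddCommGroup E] [InnerProductSpace ℝ E]
    [CompleteSpace E] {h : E → ℝ} {g : E} {γ : ℝ → E} {v : E} {τ : ℝ}
    (hh : HasGradientAt h g (γ τ)) (hγ : HasDerivAt γ v τ) :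
    HasDerivAt (fun s => h (γ s)) ⟪g, v⟫ τ := by
  have hchain := hh.hasFDerivAt.comp_hasDerivAt τ hγ
  rwa [InnerProductSpace.toDual_apply_apply] at hchain

theorem eq_exp_mul_add_integral_of_hasDerivAt {u g : ℝ → ℝ} {lam : ℝ}
    (hu : ∀ τ, HasDerivAt u (lam * u τ - g τ) τ) (hg : Continuous g) (t : ℝ) :
    u 0 = Real.exp (-lam * t) * u t + ∫ τ in (0 : ℝ)..t, Real.exp (-lam * τ) * g τ := by
  have hderiv : ∀ τ, HasDerivAt (fun s => Real.exp (-lam * s) * u s)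
      (-(Real.exp (-lam * τ) * g τ)) τ := by
    intro τ
    have hexp : HasDerivAt (fun s => Real.exp (-lam * s)) (Real.exp (-lam * τ) * -lam) τ := by
      simpa using ((hasDerivAt_id τ).const_mul (-lam)).exp
    refine (hexp.mul (hu τ)).congr_deriv ?_
    ring
  have hcont : Continuous fun τ => -(Real.exp (-lam * τ) * g τ) := by fun_prop
  have hint := intervalIntegral.integral_eq_sub_of_hasDerivAt (fun τ _ => hderiv τ)
    (hcont.intervalIntegrable 0 t)
  rw [intervalIntegral.integral_neg] at hint
  simp only [mul_zero, Real.exp_zero, one_mul] at hint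
  linarith

theorem stmt1_general {n : ℕ}
    (f : EuclideanSpace ℝ (Fin n) → EuclideanSpace ℝ (Fin n))
    (Fn : EuclideanSpace ℝ (Fin n) → EuclideanSpace ℝ (Fin n))
    (lam : ℝ) (w : EuclideanSpace ℝ (Fin n))
    (h : EuclideanSpace ℝ (Fin n) → ℝ)
    (hdiff : Differentiable ℝ h)
    (hpde : ∀ x, ⟪gradient h x, f x⟫ - lam * h x + ⟪w, Fn x⟫ = 0)
    (γ : ℝ → EuclideanSpace ℝ (Fin n))
    (hγ : ∀ τ, HasDerivAt γ (f (γ τ)) τ)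
    (hcont : Continuous fun τ => (⟪w, Fn (γ τ)⟫ : ℝ)) :
    ∀ t : ℝ, 0 ≤ t →
      h (γ 0) = Real.exp (-lam * t) * h (γ t)
        + ∫ τ in (0 : ℝ)..t, Real.exp (-lam * τ) * ⟪w, Fn (γ τ)⟫ := by
  intro t _
  refine eq_exp_mul_add_integral_of_hasDerivAt (u := fun s => h (γ s)) (fun τ => ?_) hcont t
  have hchain := (hdiff (γ τ)).hasGradientAt.comp_hasDerivAt (hγ τ)
  rwa [show ⟪gradient h (γ τ), f (γ τ)⟫ = lam * h (γ τ) - ⟪w, Fn (γ τ)⟫ by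
    linarith [hpde (γ τ)]] at hchain

/-- Path-integral solution formula for the linear PDE satisfied by the
nonlinear part `h` of a principal Koopman eigenfunction:
`h(γ(0)) = e^{−λt} h(γ(t)) + ∫₀ᵗ e^{−λτ} ⟨w, Fₙ(γ(τ))⟩ dτ` for all `t ≥ 0`. -/
theorem stmt1 {n : ℕ}
    (f : EuclideanSpace ℝ (Fin n) → EuclideanSpace ℝ (Fin n))
    (A : Matrix (Fin n) (Fin n) ℝ)
    (Fn : EuclideanSpace ℝ (Fin n) → EuclideanSpace ℝ (Fin n))
    (hFn : ∀ x, Fn x = f x - Matrix.toEuclideanLin A x)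
    (lam : ℝ) (w : EuclideanSpace ℝ (Fin n))
    (h : EuclideanSpace ℝ (Fin n) → ℝ)
    (hdiff : Differentiable ℝ h)
    (hpde : ∀ x, ⟪gradient h x, f x⟫ - lam * h x + ⟪w, Fn x⟫ = 0)
    (γ : ℝ → EuclideanSpace ℝ (Fin n))
    (hγ : ∀ τ, HasDerivAt γ (f (γ τ)) τ)
    (hcont : Continuous fun τ => (⟪w, Fn (γ τ)⟫ : ℝ)) :
    ∀ t : ℝ, 0 ≤ t →
      h (γ 0) = Real.exp (-lam * t) * h (γ t)
        + ∫ τ in (0 : ℝ)..t, Real.exp (-lam * τ) * ⟪w, Fn (γ τ)⟫ :=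
  stmt1_general f Fn lam w h hdiff hpde γ hγ hcont
end

section
/- Let f : ℝⁿ → ℝⁿ be differentiable at 0 with f(0) = 0 and Fréchet derivative A := Df(0), let λ ∈ ℝ, w ∈ ℝⁿ, and let h : ℝⁿ → ℝ be differentiable with h(0) = 0, ∇h(0) = 0, and x ↦ ∇h(x) continuous at 0. If φ(x) := ⟨w, x⟩ + h(x) satisfies ⟨∇φ(x), f(x)⟩ = λ φ(x) for all x in a neighborhood of 0, then w is a left eigenvector of A with eigenvalue λ, i.e., Aᵀ w = λ w. -/
open scoped RealInnerProductSpace Topology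

/-!
Write `φ x = ⟪w, x⟫ + h x`, so that `⟪∇φ x, f x⟫ = ⟪w, f x⟫ + ⟪∇h x, f x⟫`. Near `0` the last
term is `o(1) · O(‖x‖) = o(‖x‖)`, since `∇h` is continuous with `∇h 0 = 0` and `f 0 = 0`.
Differentiating the eigenfunction equation at `0` therefore gives `⟪w, A v⟫ = λ ⟪w, v⟫`.
-/

open Asymptotics Filter

variable {X E : Type*} [NormedAddCommGroup X] [NormedSpace ℝ X]
  [NormedAddCommGroup E] [InnerProductSpace ℝ E]

theorem hasFDerivAt_inner_zero_of_tendsto_zero {G F : X → E} {F' : X →L[ℝ] E} {x₀ : X}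
    (hG : Tendsto G (𝓝 x₀) (𝓝 0)) (hF : HasFDerivAt F F' x₀) (hF₀ : F x₀ = 0) :
    HasFDerivAt (fun x => ⟪G x, F x⟫) (0 : X →L[ℝ] ℝ) x₀ := by
  rw [hasFDerivAt_iff_isLittleO]
  simp only [hF₀, inner_zero_right, sub_zero, zero_apply]
  have hG_small : G =o[𝓝 x₀] (fun _ => (1 : ℝ)) := (isLittleO_one_iff ℝ).mpr hG
  have hF_big : F =O[𝓝 x₀] fun x => x - x₀ := by simpa [hF₀] using hF.isBigO_sub
  have hinner_le : (fun x => ⟪G x, F x⟫) =O[𝓝 x₀] fun x => ‖G x‖ * ‖F x‖ :=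
    isBigO_of_le _ fun x => by simpa [abs_mul] using abs_real_inner_le_norm (G x) (F x)
  simpa using hinner_le.trans_isLittleO (hG_small.norm_left.mul_isBigO hF_big.norm_norm)

variable [CompleteSpace E]

theorem HasGradientAt.inner_left_add {h : E → ℝ} {g w x : E} (hh : HasGradientAt h g x) :
    HasGradientAt (fun y => ⟪w, y⟫ + h y) (w + g) x := by
  rw [hasGradientAt_iff_hasFDerivAt, map_add]
  refine ((innerSL ℝ w).hasFDerivAt.add hh.hasFDerivAt).congr_of_eventuallyEq ?_
  exact Eventually.of_forall fun y => by simp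

theorem stmt5_general {n : ℕ}
    (f : EuclideanSpace ℝ (Fin n) → EuclideanSpace ℝ (Fin n))
    (hf0 : f 0 = 0) (hfd : DifferentiableAt ℝ f 0)
    (lam : ℝ) (w : EuclideanSpace ℝ (Fin n))
    (h : EuclideanSpace ℝ (Fin n) → ℝ)
    (hdiff : Differentiable ℝ h)
    (hgrad0 : gradient h 0 = 0)
    (hgradcont : ContinuousAt (gradient h) 0)
    (φ : EuclideanSpace ℝ (Fin n) → ℝ)
    (hφ : ∀ x, φ x = ⟪w, x⟫ + h x)
    (heig : ∀ᶠ x in 𝓝 (0 : EuclideanSpace ℝ (Fin n)), ⟪gradient φ x, f x⟫ = lam * φ x) :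
    ∀ v : EuclideanSpace ℝ (Fin n), ⟪w, fderiv ℝ f 0 v⟫ = lam * ⟪w, v⟫ := by
  intro v
  obtain rfl : φ = fun x => ⟪w, x⟫ + h x := funext hφ
  have hgradφ : ∀ x, gradient (fun y => ⟪w, y⟫ + h y) x = w + gradient h x := fun x =>
    (hdiff x).hasGradientAt.inner_left_add.gradient
  have hA := hfd.hasFDerivAt
  have hlhs : HasFDerivAt (fun x => ⟪w, f x⟫ + ⟪gradient h x, f x⟫)
      ((innerSL ℝ w).comp (fderiv ℝ f 0) + 0) 0 :=
    ((innerSL ℝ w).hasFDerivAt.comp 0 hA).add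
      (hasFDerivAt_inner_zero_of_tendsto_zero (by simpa only [hgrad0] using hgradcont.tendsto)
        hA hf0)
  have hh0 : HasGradientAt h 0 0 := by simpa only [hgrad0] using (hdiff 0).hasGradientAt
  have hrhs := (hh0.inner_left_add (w := w)).hasFDerivAt.const_mul lam
  have heq : (fun x => ⟪w, f x⟫ + ⟪gradient h x, f x⟫) =ᶠ[𝓝 0]
      fun x => lam * (⟪w, x⟫ + h x) :=
    heig.mono fun x hx => by rwa [hgradφ, inner_add_left] at hx
  simpa using congrArg (· v) ((hlhs.congr_of_eventuallyEq heq.symm).unique hrhs)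

/-- If `φ(x) = ⟨w,x⟩ + h(x)` is a Koopman generator eigenfunction near the
hyperbolic equilibrium `0` of `ẋ = f(x)` (with `h` vanishing to first order at `0`), then `w`
is a left eigenvector of `A = Df(0)`, i.e. `⟨w, A v⟩ = λ ⟨w, v⟩` for all `v`. -/
theorem stmt5 {n : ℕ}
    (f : EuclideanSpace ℝ (Fin n) → EuclideanSpace ℝ (Fin n))
    (hf0 : f 0 = 0) (hfd : DifferentiableAt ℝ f 0)
    (lam : ℝ) (w : EuclideanSpace ℝ (Fin n))
    (h : EuclideanSpace ℝ (Fin n) → ℝ)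
    (hdiff : Differentiable ℝ h)
    (h0 : h 0 = 0) (hgrad0 : gradient h 0 = 0)
    (hgradcont : ContinuousAt (gradient h) 0)
    (φ : EuclideanSpace ℝ (Fin n) → ℝ)
    (hφ : ∀ x, φ x = ⟪w, x⟫ + h x)
    (heig : ∀ᶠ x in 𝓝 (0 : EuclideanSpace ℝ (Fin n)), ⟪gradient φ x, f x⟫ = lam * φ x) :
    ∀ v : EuclideanSpace ℝ (Fin n), ⟪w, fderiv ℝ f 0 v⟫ = lam * ⟪w, v⟫ :=
  stmt5_general f hf0 hfd lam w h hdiff hgrad0 hgradcont φ hφ heig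
end

section
/- Let f : ℝⁿ → ℝⁿ, λ ∈ ℝ, and let φ : ℝⁿ → ℝ be differentiable with ⟨∇φ(x), f(x)⟩ = λ φ(x) for all x. Then the zero level set Z := {x ∈ ℝⁿ : φ(x) = 0} is invariant under the dynamics: for every differentiable solution curve γ : ℝ → ℝⁿ with γ′(t) = f(γ(t)) for all t and γ(0) ∈ Z, one has γ(t) ∈ Z for all t ∈ ℝ. -/
/-!
Along a solution curve `γ`, the eigenfunction relation makes `ψ = φ ∘ γ` solve the scalar linear
ODE `ψ' = λ ψ`. The zero function solves it too, and the right-hand side is Lipschitz, so by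
uniqueness of solutions `ψ` vanishes identically as soon as it vanishes at one time.
-/

open scoped RealInnerProductSpace

theorem eq_zero_of_hasDerivAt_eq_smul {F : Type*} [NormedAddCommGroup F] [NormedSpace ℝ F]
    {ψ : ℝ → F} {lam t₀ : ℝ} (hψ : ∀ t, HasDerivAt ψ (lam • ψ t) t) (h₀ : ψ t₀ = 0) :
    ψ = 0 :=
  ODE_solution_unique_univ (v := fun _ x ↦ lam • x) (s := fun _ ↦ Set.univ)
    (fun _ ↦ (lipschitzWith_smul lam).lipschitzOnWith)
    (fun t ↦ ⟨hψ t, trivial⟩)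
    (fun _ ↦ ⟨by simp, trivial⟩) h₀

section

variable {E : Type*} [NormedAddCommGroup E] [InnerProductSpace ℝ E] [CompleteSpace E]

theorem DifferentiableAt.hasDerivAt_comp_inner_gradient {φ : E → ℝ} {γ : ℝ → E} {v : E} {t : ℝ}
    (hφ : DifferentiableAt ℝ φ (γ t)) (hγ : HasDerivAt γ v t) :
    HasDerivAt (φ ∘ γ) ⟪gradient φ (γ t), v⟫ t := by
  rw [inner_gradient_left]
  exact hφ.hasFDerivAt.comp_hasDerivAt t hγ

theorem hasDerivAt_comp_solution_of_inner_gradient_eq_mul {f : E → E} {φ : E → ℝ} {lam : ℝ}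
    (hφ : Differentiable ℝ φ) (heig : ∀ x, ⟪gradient φ x, f x⟫ = lam * φ x) {γ : ℝ → E}
    (hγ : ∀ t, HasDerivAt γ (f (γ t)) t) (t : ℝ) :
    HasDerivAt (φ ∘ γ) (lam * φ (γ t)) t :=
  heig (γ t) ▸ (hφ (γ t)).hasDerivAt_comp_inner_gradient (hγ t)

theorem comp_solution_eq_zero_of_inner_gradient_eq_mul {f : E → E} {φ : E → ℝ} {lam : ℝ}
    (hφ : Differentiable ℝ φ) (heig : ∀ x, ⟪gradient φ x, f x⟫ = lam * φ x) {γ : ℝ → E}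
    (hγ : ∀ t, HasDerivAt γ (f (γ t)) t) {t₀ : ℝ} (h₀ : φ (γ t₀) = 0) (t : ℝ) :
    φ (γ t) = 0 :=
  congrFun (eq_zero_of_hasDerivAt_eq_smul
    (hasDerivAt_comp_solution_of_inner_gradient_eq_mul hφ heig hγ) h₀) t

end

/-- The zero level set of a Koopman generator eigenfunction is invariant under
the dynamics: solution curves starting on `{φ = 0}` remain on it for all time. -/
theorem stmt8 {n : ℕ}
    (f : EuclideanSpace ℝ (Fin n) → EuclideanSpace ℝ (Fin n))
    (lam : ℝ)
    (φ : EuclideanSpace ℝ (Fin n) → ℝ)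
    (hdiff : Differentiable ℝ φ)
    (heig : ∀ x, ⟪gradient φ x, f x⟫ = lam * φ x) :
    ∀ γ : ℝ → EuclideanSpace ℝ (Fin n),
      (∀ t, HasDerivAt γ (f (γ t)) t) →
      γ 0 ∈ {x : EuclideanSpace ℝ (Fin n) | φ x = 0} →
      ∀ t : ℝ, γ t ∈ {x : EuclideanSpace ℝ (Fin n) | φ x = 0} :=
  fun _ hγ h₀ ↦ comp_solution_eq_zero_of_inner_gradient_eq_mul hdiff heig hγ h₀
end

section
/- Let μ be a probability measure on ℝⁿ and let Ψ = (ψ_1, …, ψ_N) : ℝⁿ → ℝᴺ be measurable and satisfy the μ-independence property: for every nonzero c ∈ ℝᴺ, μ{x ∈ ℝⁿ : ⟨c, Ψ(x)⟩ = 0} = 0. Let X_1, …, X_N be independent random vectors each with law μ. Then almost surely the vectors Ψ(X_1), …, Ψ(X_N) ∈ ℝᴺ are linearly independent; equivalently, the N×N matrix G with rows Ψ(X_k)ᵀ is almost surely invertible. -/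
/-!
If every proper subspace of `ℝᴺ` has `μ`-null preimage under `Ψ` (which the hyperplane condition
gives, since a proper subspace lies in the hyperplane orthogonal to any nonzero `c` in its
orthogonal complement), then for `k < N` independent vectors `Ψ(x₁), …, Ψ(x_k)` the set of `y`
with `Ψ(y)` in their span is `μ`-null. Fubini and induction on `k` show that the tuples
`(x₁, …, x_k)`, `k ≤ N`, for which `Ψ(x₁), …, Ψ(x_k)` are dependent form a `μ^⊗k`-null set, and
independence of the `X_k` says their joint law is `μ^⊗N`.
-/

open MeasureTheory ProbabilityTheory
open scoped RealInnerProductSpace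

theorem span_range_ne_top_of_card_lt_finrank {K E : Type*} [DivisionRing K] [AddCommGroup E]
    [Module K E] {k : ℕ} (v : Fin k → E) (hk : k < Module.finrank K E) :
    Submodule.span K (Set.range v) ≠ ⊤ := by
  intro htop
  have := finrank_range_le_card (R := K) v
  rw [Set.finrank, htop, finrank_top, Fintype.card_fin] at this
  omega

theorem measure_setOf_not_linearIndependent_cons_eq_zero {α K E : Type*} [MeasurableSpace α]
    [DivisionRing K] [AddCommGroup E] [Module K E] {μ : Measure α} {Ψ : α → E}
    (hΨV : ∀ V : Submodule K E, V ≠ ⊤ → μ (Ψ ⁻¹' V) = 0) {k : ℕ} {v : Fin k → E}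
    (hv : LinearIndependent K v) (hk : k < Module.finrank K E) :
    μ {y | ¬ LinearIndependent K (Fin.cons (Ψ y) v : Fin (k + 1) → E)} = 0 := by
  refine measure_mono_null (fun y hy => ?_)
    (hΨV _ (span_range_ne_top_of_card_lt_finrank v hk))
  simp only [Set.mem_ofPred_eq, linearIndependent_finCons, not_and_or, not_not] at hy
  exact hy.resolve_left (not_not.2 hv)

theorem measure_preimage_eq_zero_of_ne_top {α E : Type*} [MeasurableSpace α]
    [NormedAddCommGroup E] [InnerProductSpace ℝ E] [FiniteDimensional ℝ E]
    {μ : Measure α} {Ψ : α → E} (hind : ∀ c : E, c ≠ 0 → μ {x | ⟪c, Ψ x⟫ = 0} = 0)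
    (V : Submodule ℝ E) (hV : V ≠ ⊤) : μ (Ψ ⁻¹' V) = 0 := by
  obtain ⟨c, hcV, hc⟩ := Submodule.exists_mem_ne_zero_of_ne_bot
    (mt Submodule.orthogonal_eq_bot_iff.1 hV)
  exact measure_mono_null (fun x hx => (Submodule.mem_orthogonal' V c).1 hcV _ hx) (hind c hc)

section Measurable

variable {α E : Type*} [MeasurableSpace α]
  [NormedAddCommGroup E] [NormedSpace ℝ E] [FiniteDimensional ℝ E]
  [MeasurableSpace E] [BorelSpace E]

theorem measurableSet_setOf_linearIndependent_comp {ι : Type*} [Finite ι] {Ψ : α → E}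
    (hΨ : Measurable Ψ) :
    MeasurableSet {x : ι → α | LinearIndependent ℝ fun i => Ψ (x i)} :=
  isOpen_setOfPred_linearIndependent.measurableSet.preimage
    (measurable_pi_lambda _ fun i => hΨ.comp (measurable_pi_apply i))

theorem measure_pi_setOf_not_linearIndependent_eq_zero {μ : Measure α} [SigmaFinite μ]
    {Ψ : α → E} (hΨ : Measurable Ψ) (hΨV : ∀ V : Submodule ℝ E, V ≠ ⊤ → μ (Ψ ⁻¹' V) = 0) :
    ∀ k ≤ Module.finrank ℝ E, (Measure.pi fun _ : Fin k => μ)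
      {x | ¬ LinearIndependent ℝ fun i => Ψ (x i)} = 0 := by
  intro k
  induction k with
  | zero => simp
  | succ k ih =>
    intro hk
    set S := {x : Fin (k + 1) → α | ¬ LinearIndependent ℝ fun i => Ψ (x i)}
    have hS : MeasurableSet S := (measurableSet_setOf_linearIndependent_comp hΨ).compl
    let e := MeasurableEquiv.piFinSuccAbove (fun _ : Fin (k + 1) => α) 0
    have he := (measurePreserving_piFinSuccAbove (fun _ : Fin (k + 1) => μ) 0).symm e
    have hslice : ∀ᵐ x ∂(Measure.pi fun _ : Fin k => μ),
        μ ((fun y => (y, x)) ⁻¹' (e.symm ⁻¹' S)) = 0 := by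
      have hindep : ∀ᵐ x ∂(Measure.pi fun _ : Fin k => μ),
          LinearIndependent ℝ fun i => Ψ (x i) := ae_iff.2 (ih (by omega))
      filter_upwards [hindep] with x hx
      convert measure_setOf_not_linearIndependent_cons_eq_zero hΨV hx (by omega) using 3
      ext y
      simp only [S, e, Set.mem_preimage, Set.mem_ofPred_eq,
        MeasurableEquiv.piFinSuccAbove_symm_apply, Fin.insertNthEquiv_zero, Fin.consEquiv_apply]
      rw [← Function.comp_def Ψ, Fin.comp_cons]
      rfl
    rw [← he.measure_preimage hS.nullMeasurableSet,
      Measure.prod_apply_symm (e.symm.measurable hS), lintegral_congr_ae hslice, lintegral_zero]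

end Measurable

theorem isUnit_det_of_linearIndependent {N : ℕ} {v : Fin N → EuclideanSpace ℝ (Fin N)}
    (hv : LinearIndependent ℝ v) : IsUnit (Matrix.of fun k i => v k i).det := by
  rw [← Matrix.isUnit_iff_isUnit_det, ← Matrix.linearIndependent_rows_iff_isUnit]
  exact hv.map' (WithLp.linearEquiv 2 ℝ (Fin N → ℝ)).toLinearMap
    (WithLp.linearEquiv 2 ℝ (Fin N → ℝ)).ker

theorem stmt14_general {n N : ℕ} {Ω : Type*} [MeasurableSpace Ω]
    (P : Measure Ω)
    (μ : Measure (EuclideanSpace ℝ (Fin n))) [IsProbabilityMeasure μ]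
    (Ψ : EuclideanSpace ℝ (Fin n) → EuclideanSpace ℝ (Fin N))
    (hΨ : Measurable Ψ)
    (hind : ∀ c : EuclideanSpace ℝ (Fin N), c ≠ 0 →
      μ {x : EuclideanSpace ℝ (Fin n) | ⟪c, Ψ x⟫ = 0} = 0)
    (X : Fin N → Ω → EuclideanSpace ℝ (Fin n))
    (hXmeas : ∀ k, Measurable (X k))
    (hXindep : iIndepFun X P)
    (hXlaw : ∀ k, P.map (X k) = μ) :
    ∀ᵐ ω ∂P,
      LinearIndependent ℝ (fun k : Fin N => Ψ (X k ω)) ∧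
      IsUnit (Matrix.of fun k i : Fin N => Ψ (X k ω) i).det := by
  have hlaw : P.map (fun ω k => X k ω) = Measure.pi fun _ => μ := by
    simpa only [hXlaw] using hXindep.map_fun_eq_pi_map fun k => (hXmeas k).aemeasurable
  have hnull := measure_pi_setOf_not_linearIndependent_eq_zero hΨ
    (measure_preimage_eq_zero_of_ne_top hind) N finrank_euclideanSpace_fin.ge
  have hae : ∀ᵐ ω ∂P, LinearIndependent ℝ fun k => Ψ (X k ω) := by
    rw [← hlaw, ← ae_iff] at hnull
    exact ae_of_ae_map (measurable_pi_lambda _ hXmeas).aemeasurable hnull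
  filter_upwards [hae] with ω hω
  exact ⟨hω, isUnit_det_of_linearIndependent hω⟩

/-- If `Ψ` satisfies the μ-independence property and `X₁, …, X_N` are
independent random vectors with common law `μ`, then almost surely the vectors
`Ψ(X₁), …, Ψ(X_N)` are linearly independent, equivalently the data matrix `G` with rows
`Ψ(X_k)ᵀ` is almost surely invertible. -/
theorem stmt14 {n N : ℕ} {Ω : Type*} [MeasurableSpace Ω]
    (P : Measure Ω) [IsProbabilityMeasure P]
    (μ : Measure (EuclideanSpace ℝ (Fin n))) [IsProbabilityMeasure μ]
    (Ψ : EuclideanSpace ℝ (Fin n) → EuclideanSpace ℝ (Fin N))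
    (hΨ : Measurable Ψ)
    (hind : ∀ c : EuclideanSpace ℝ (Fin N), c ≠ 0 →
      μ {x : EuclideanSpace ℝ (Fin n) | ⟪c, Ψ x⟫ = 0} = 0)
    (X : Fin N → Ω → EuclideanSpace ℝ (Fin n))
    (hXmeas : ∀ k, Measurable (X k))
    (hXindep : iIndepFun X P)
    (hXlaw : ∀ k, P.map (X k) = μ) :
    ∀ᵐ ω ∂P,
      LinearIndependent ℝ (fun k : Fin N => Ψ (X k ω)) ∧
      IsUnit (Matrix.of fun k i : Fin N => Ψ (X k ω) i).det :=
  stmt14_general P μ Ψ hΨ hind X hXmeas hXindep hXlaw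
end

section
/- Let f : ℝⁿ → ℝⁿ, let A be a real n×n matrix, set F_n(x) := f(x) − A x, let λ > 0 be a real number and w ∈ ℝⁿ. Let h : ℝⁿ → ℝ be differentiable satisfying ⟨∇h(x), f(x)⟩ − λ h(x) + ⟨w, F_n(x)⟩ = 0 for all x, and define the eigenfunction φ_λ(x) := ⟨w, x⟩ + h(x) and its path-integral approximation φ̂_λ(x) := ⟨w, x⟩ + ∫₀^{t(x)} e^{−λ τ} ⟨w, F_n(γ(τ))⟩ dτ, where γ is a differentiable solution curve with γ′ = f∘γ, γ(0) = x, τ ↦ ⟨w, F_n(γ(τ))⟩ continuous, and t(x) ≥ 0 satisfies ‖γ(t(x))‖ ≤ ε. If δ ≥ 0 is such that |h(y)| ≤ δ for all ‖y‖ ≤ ε, then |φ_λ(x) − φ̂_λ(x)| ≤ δ. -/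
open scoped RealInnerProductSpace

/-!
Along the trajectory, the PDE `⟪∇h, f⟫ - λ h + u = 0` says exactly that
`τ ↦ e^{-λτ} h(γ τ)` has derivative `-e^{-λτ} u(γ τ)`. Integrating from `0` to `t` gives
`h(x) = ∫₀ᵗ e^{-λτ} u(γ τ) dτ + e^{-λt} h(γ t)`, so the error of the path integral is the
boundary term `e^{-λt} h(γ t)`, which is at most `|h(γ t)| ≤ δ` because `λ t ≥ 0`.
-/

section PathIntegral

variable {E : Type*} [NormedAddCommGroup E] [InnerProductSpace ℝ E] [CompleteSpace E]
  {f : E → E} {γ : ℝ → E} {h : E → ℝ}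

theorem hasDerivAt_comp_eq_inner_gradient {τ : ℝ} {v : E} (hh : DifferentiableAt ℝ h (γ τ))
    (hγ : HasDerivAt γ v τ) :
    HasDerivAt (fun s => h (γ s)) ⟪gradient h (γ τ), v⟫ τ := by
  have hc := hh.hasGradientAt.hasFDerivAt.comp_hasDerivAt τ hγ
  rwa [InnerProductSpace.toDual_apply_apply] at hc

theorem hasDerivAt_exp_mul_comp_of_pde (hh : Differentiable ℝ h)
    (hγ : ∀ τ, HasDerivAt γ (f (γ τ)) τ) {lam : ℝ} {u : E → ℝ}
    (hpde : ∀ y, ⟪gradient h y, f y⟫ - lam * h y + u y = 0) (τ : ℝ) :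
    HasDerivAt (fun s => Real.exp (-lam * s) * h (γ s))
      (-(Real.exp (-lam * τ) * u (γ τ))) τ := by
  have hexp : HasDerivAt (fun s => Real.exp (-lam * s)) (Real.exp (-lam * τ) * -lam) τ := by
    simpa using ((hasDerivAt_id τ).const_mul (-lam)).exp
  refine (hexp.mul (hasDerivAt_comp_eq_inner_gradient (hh _) (hγ τ))).congr_deriv ?_
  linear_combination Real.exp (-lam * τ) * hpde (γ τ)

theorem integral_exp_mul_comp_eq_of_pde (hh : Differentiable ℝ h)
    (hγ : ∀ τ, HasDerivAt γ (f (γ τ)) τ) {lam : ℝ} {u : E → ℝ}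
    (hpde : ∀ y, ⟪gradient h y, f y⟫ - lam * h y + u y = 0)
    (hu : Continuous fun τ => u (γ τ)) (t : ℝ) :
    ∫ τ in (0 : ℝ)..t, Real.exp (-lam * τ) * u (γ τ) =
      h (γ 0) - Real.exp (-lam * t) * h (γ t) := by
  have hint : IntervalIntegrable (fun τ => -(Real.exp (-lam * τ) * u (γ τ))) MeasureTheory.volume
      0 t :=
    ((by fun_prop : Continuous fun τ => Real.exp (-lam * τ)).mul hu).neg.intervalIntegrable 0 t
  have hftc := intervalIntegral.integral_eq_sub_of_hasDerivAt
    (fun τ _ => hasDerivAt_exp_mul_comp_of_pde hh hγ hpde τ) hint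
  rw [intervalIntegral.integral_neg] at hftc
  simp only [mul_zero, Real.exp_zero, one_mul] at hftc
  linarith

end PathIntegral

theorem stmt16_general {n : ℕ}
    (f : EuclideanSpace ℝ (Fin n) → EuclideanSpace ℝ (Fin n))
    (Fn : EuclideanSpace ℝ (Fin n) → EuclideanSpace ℝ (Fin n))
    (lam : ℝ) (hlam : 0 < lam) (w : EuclideanSpace ℝ (Fin n))
    (h : EuclideanSpace ℝ (Fin n) → ℝ)
    (hdiff : Differentiable ℝ h)
    (hpde : ∀ x, ⟪gradient h x, f x⟫ - lam * h x + ⟪w, Fn x⟫ = 0)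
    (φlam : EuclideanSpace ℝ (Fin n) → ℝ)
    (hφlam : ∀ x, φlam x = ⟪w, x⟫ + h x)
    (x : EuclideanSpace ℝ (Fin n))
    (γ : ℝ → EuclideanSpace ℝ (Fin n))
    (hγ : ∀ τ, HasDerivAt γ (f (γ τ)) τ)
    (hγ0 : γ 0 = x)
    (hcont : Continuous fun τ => (⟪w, Fn (γ τ)⟫ : ℝ))
    (tx : ℝ) (htx : 0 ≤ tx)
    (ε δ : ℝ)
    (hreach : ‖γ tx‖ ≤ ε)
    (hsmall : ∀ y : EuclideanSpace ℝ (Fin n), ‖y‖ ≤ ε → |h y| ≤ δ)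
    (φhat : ℝ)
    (hφhat : φhat = ⟪w, x⟫ + ∫ τ in (0 : ℝ)..tx, Real.exp (-lam * τ) * ⟪w, Fn (γ τ)⟫) :
    |φlam x - φhat| ≤ δ := by
  have herror : φlam x - φhat = Real.exp (-lam * tx) * h (γ tx) := by
    rw [hφlam, hφhat, integral_exp_mul_comp_eq_of_pde hdiff hγ hpde hcont, hγ0]
    ring
  have hdecay : Real.exp (-lam * tx) ≤ 1 := Real.exp_le_one_iff.mpr (by nlinarith)
  calc |φlam x - φhat| = Real.exp (-lam * tx) * |h (γ tx)| := by
        rw [herror, abs_mul, abs_of_pos (Real.exp_pos _)]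
    _ ≤ |h (γ tx)| := mul_le_of_le_one_left (abs_nonneg _) hdecay
    _ ≤ δ := hsmall _ hreach

/-- For the principal eigenfunction `φ_λ(x) = ⟨w,x⟩ + h(x)` and its
path-integral approximation `φ̂_λ(x) = ⟨w,x⟩ + ∫₀^{t(x)} e^{−λτ}⟨w, Fₙ(γ(τ))⟩dτ`, if
`|h| ≤ δ` on the `ε`-ball and the trajectory from `x` reaches that ball at time `t(x) ≥ 0`,
then `|φ_λ(x) − φ̂_λ(x)| ≤ δ`. -/
theorem stmt16 {n : ℕ}
    (f : EuclideanSpace ℝ (Fin n) → EuclideanSpace ℝ (Fin n))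
    (A : Matrix (Fin n) (Fin n) ℝ)
    (Fn : EuclideanSpace ℝ (Fin n) → EuclideanSpace ℝ (Fin n))
    (hFn : ∀ x, Fn x = f x - Matrix.toEuclideanLin A x)
    (lam : ℝ) (hlam : 0 < lam) (w : EuclideanSpace ℝ (Fin n))
    (h : EuclideanSpace ℝ (Fin n) → ℝ)
    (hdiff : Differentiable ℝ h)
    (hpde : ∀ x, ⟪gradient h x, f x⟫ - lam * h x + ⟪w, Fn x⟫ = 0)
    (φlam : EuclideanSpace ℝ (Fin n) → ℝ)
    (hφlam : ∀ x, φlam x = ⟪w, x⟫ + h x)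
    (x : EuclideanSpace ℝ (Fin n))
    (γ : ℝ → EuclideanSpace ℝ (Fin n))
    (hγ : ∀ τ, HasDerivAt γ (f (γ τ)) τ)
    (hγ0 : γ 0 = x)
    (hcont : Continuous fun τ => (⟪w, Fn (γ τ)⟫ : ℝ))
    (tx : ℝ) (htx : 0 ≤ tx)
    (ε δ : ℝ) (hε : 0 < ε) (hδ : 0 ≤ δ)
    (hreach : ‖γ tx‖ ≤ ε)
    (hsmall : ∀ y : EuclideanSpace ℝ (Fin n), ‖y‖ ≤ ε → |h y| ≤ δ)
    (φhat : ℝ)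
    (hφhat : φhat = ⟪w, x⟫ + ∫ τ in (0 : ℝ)..tx, Real.exp (-lam * τ) * ⟪w, Fn (γ τ)⟫) :
    |φlam x - φhat| ≤ δ :=
  stmt16_general f Fn lam hlam w h hdiff hpde φlam hφlam x γ hγ hγ0 hcont tx htx ε δ hreach hsmall
    φhat hφhat
end
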